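/- For every nonnegative integer N, the following identity holds in the ring ℤ[z]⟦q⟧ of formal power series in q with coefficients in ℤ[z]: (q; q)_N · ∑_{π ∈ P_{≤N}} q^{O(π)} z^{γ(π)} = ∑_{k=0}^{N} q^k z^k [N choose k]_q. (The infinite sum over P_{≤N} is a well-defined formal power series: for each n there are only finitely many π ∈ P_{≤N} with O(π) = n, and γ(π) ≤ N for all of them.) -/

import Mathlib

/-- Sum of `f` over the entries of a list at even 0-based positions, i.e. over the
odd-indexed parts `λ1, λ3, λ5, …` of a partition `(λ1, λ2, λ3, …)`. -/
def sumAlt (f : ℕ → ℕ) : List ℕ → ℕ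
  | [] => 0
  | [a] => f a
  | a :: _ :: l => f a + sumAlt f l

/-- `O(π) = λ1 + λ3 + λ5 + ⋯`, the sum of the odd-indexed parts. -/
def Osum (l : List ℕ) : ℕ := sumAlt id l

/-- `E(π) = λ2 + λ4 + λ6 + ⋯`, the sum of the even-indexed parts. -/
def Esum (l : List ℕ) : ℕ := sumAlt id l.tail

/-- `γ(π) = λ1 − λ2 + λ3 − λ4 + ⋯ = O(π) − E(π)`, the alternating sum of the parts.
For a weakly decreasing list we have `Osum l ≥ Esum l`, so natural subtraction is exact. -/
def gammaSum (l : List ℕ) : ℕ := Osum l - Esum l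

/-- `⌈O⌉(π) = ∑ ⌈λ_{2i−1}/2⌉`. -/
def ceilO (l : List ℕ) : ℕ := sumAlt (fun a => (a + 1) / 2) l

/-- `⌊O⌋(π) = ∑ ⌊λ_{2i−1}/2⌋`. -/
def floorO (l : List ℕ) : ℕ := sumAlt (fun a => a / 2) l

/-- `⌈E⌉(π) = ∑ ⌈λ_{2i}/2⌉`. -/
def ceilE (l : List ℕ) : ℕ := sumAlt (fun a => (a + 1) / 2) l.tail

/-- `⌊E⌋(π) = ∑ ⌊λ_{2i}/2⌋`. -/
def floorE (l : List ℕ) : ℕ := sumAlt (fun a => a / 2) l.tail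

/-- A partition: a weakly decreasing finite list of positive integers. -/
def IsPartition (l : List ℕ) : Prop := l.Pairwise (· ≥ ·) ∧ ∀ x ∈ l, 0 < x

/-- A partition into distinct parts: a strictly decreasing finite list of positive integers. -/
def IsDistinctPartition (l : List ℕ) : Prop := l.Pairwise (· > ·) ∧ ∀ x ∈ l, 0 < x

/-- The Gaussian binomial coefficient `[n choose k]_q` as a polynomial in `q`
(defined by the q-Pascal recurrence; it equals `(q;q)_n / ((q;q)_k (q;q)_{n−k})`). -/
noncomputable def qbinom : ℕ → ℕ → Polynomial ℤ
  | _, 0 => 1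
  | 0, _ + 1 => 0
  | n + 1, k + 1 => qbinom n k + Polynomial.X ^ (k + 1) * qbinom n (k + 1)

/-!
Write `F_N = ∑_{π ∈ P_{≤N}} q^{O(π)} z^{γ(π)}`. A partition with largest part `N + 1` is
`(N + 1, b, π')` with `π' ∈ P_{≤b}`, or `(N + 1)` itself, which gives
`F_{N+1} = F_N + q^{N+1} ∑_{b ≤ N+1} z^{N+1-b} F_b`. Subtracting `qz` times the same relation one
step lower leaves the three-term recurrence `(1 - q^{N+2}) F_{N+2} = (1 + qz) F_{N+1} - qz F_N`,
so `(q;q)_N F_N` satisfies the recurrence `H_{N+2} = (1 + t) H_{N+1} - t (1 - q^{N+1}) H_N` of the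
Rogers–Szegő polynomials `H_N(t) = ∑_k t^k [N choose k]_q` at `t = qz`. That recurrence is
`q`-Pascal combined with `(1 - q^{k+1}) [n+1 choose k+1]_q = (1 - q^{n+1}) [n choose k]_q`.
-/

open Finset Polynomial

@[simp] lemma Osum_nil : Osum [] = 0 := rfl

@[simp] lemma Esum_nil : Esum [] = 0 := rfl

@[simp] lemma Esum_cons (a : ℕ) (l : List ℕ) : Esum (a :: l) = Osum l := rfl

@[simp] lemma Osum_cons (a : ℕ) (l : List ℕ) : Osum (a :: l) = a + Esum l := by
  cases l <;> rfl

lemma Osum_le_add_Esum {a : ℕ} :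
    ∀ {l : List ℕ}, l.Pairwise (· ≥ ·) → (∀ x ∈ l, x ≤ a) → Osum l ≤ a + Esum l
  | [], _, _ => by simp
  | [b], _, ha => by simpa using ha b (by simp)
  | b :: c :: l, hl, ha => by
    have hcl := (List.pairwise_cons.1 hl).2
    have hl' := Osum_le_add_Esum (List.pairwise_cons.1 hcl).2 (List.pairwise_cons.1 hcl).1
    have hb := ha b (by simp)
    simp only [Osum_cons, Esum_cons]
    omega

lemma Esum_le_Osum : ∀ {l : List ℕ}, l.Pairwise (· ≥ ·) → Esum l ≤ Osum l
  | [], _ => le_rfl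
  | _ :: _, hl => by
    simpa using Osum_le_add_Esum (List.pairwise_cons.1 hl).2 (List.pairwise_cons.1 hl).1

lemma gammaSum_cons_cons {a b : ℕ} {l : List ℕ} (hba : b ≤ a) (hl : Esum l ≤ Osum l) :
    gammaSum (a :: b :: l) = a - b + gammaSum l := by
  simp only [gammaSum, Osum_cons, Esum_cons]
  omega

lemma le_Osum_of_mem {l : List ℕ} (hl : l.Pairwise (· ≥ ·)) {x : ℕ} (hx : x ∈ l) : x ≤ Osum l := by
  obtain _ | ⟨a, l⟩ := l
  · simp at hx
  rw [Osum_cons]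
  rcases List.mem_cons.1 hx with rfl | hx
  · omega
  · have := (List.pairwise_cons.1 hl).1 x hx
    omega

lemma length_le_two_mul_Osum : ∀ {l : List ℕ}, (∀ x ∈ l, 0 < x) → l.length ≤ 2 * Osum l
  | [], _ => by simp
  | [a], h => by
    have := h a (by simp)
    simp only [List.length_singleton, Osum_cons, Esum_nil]
    omega
  | a :: b :: l, h => by
    have hl := length_le_two_mul_Osum (l := l) fun x hx => h x (by simp [hx])
    have ha := h a (by simp)
    simp only [List.length_cons, Osum_cons, Esum_cons]
    omega

lemma isPartition_cons {a : ℕ} {l : List ℕ} :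
    IsPartition (a :: l) ↔ (∀ x ∈ l, x ≤ a) ∧ 0 < a ∧ IsPartition l := by
  simp only [IsPartition, List.pairwise_cons, List.mem_cons, forall_eq_or_imp]
  tauto

def partitionsOsum (N n : ℕ) : Set (List ℕ) :=
  {l | IsPartition l ∧ (∀ x ∈ l, x ≤ N) ∧ Osum l = n}

lemma finite_setOf_length_le_forall_le (k n : ℕ) :
    {l : List ℕ | l.length ≤ k ∧ ∀ x ∈ l, x ≤ n}.Finite := by
  refine ((List.finite_length_le (Fin (n + 1)) k).image (List.map Fin.val)).subset ?_
  rintro l ⟨hk, hn⟩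
  refine ⟨l.attach.map fun x => ⟨x.1, Nat.lt_succ_of_le (hn x.1 x.2)⟩, by simpa using hk, ?_⟩
  simp [List.map_map, Function.comp_def]

lemma partitionsOsum_finite (N n : ℕ) : (partitionsOsum N n).Finite := by
  refine (finite_setOf_length_le_forall_le (2 * n) n).subset ?_
  rintro l ⟨⟨hl, hpos⟩, -, rfl⟩
  exact ⟨length_le_two_mul_Osum hpos, fun x hx => le_Osum_of_mem hl hx⟩

lemma mem_partitionsOsum_zero {n : ℕ} {l : List ℕ} :
    l ∈ partitionsOsum 0 n ↔ l = [] ∧ n = 0 := by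
  constructor
  · rintro ⟨⟨-, hpos⟩, hle, rfl⟩
    obtain _ | ⟨a, l⟩ := l
    · simp
    · exact absurd (hle a (by simp)) (hpos a (by simp)).not_ge
  · rintro ⟨rfl, rfl⟩
    exact ⟨⟨List.Pairwise.nil, by simp⟩, by simp, rfl⟩

lemma partitionsOsum_mono {M N n : ℕ} (h : M ≤ N) : partitionsOsum M n ⊆ partitionsOsum N n :=
  fun _ ⟨hl, hle, hn⟩ => ⟨hl, fun x hx => (hle x hx).trans h, hn⟩

lemma cons_cons_mem_partitionsOsum {N a b m : ℕ} {l : List ℕ} :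
    a :: b :: l ∈ partitionsOsum N (a + m) ↔ 0 < b ∧ b ≤ a ∧ a ≤ N ∧ l ∈ partitionsOsum b m := by
  simp only [partitionsOsum, Set.mem_ofPred_eq, isPartition_cons, List.mem_cons, forall_eq_or_imp,
    Osum_cons, Esum_cons, Nat.add_left_cancel_iff]
  constructor
  · rintro ⟨⟨⟨hba, -⟩, -, hbl, hb, hl⟩, ⟨haN, -⟩, rfl⟩
    exact ⟨hb, hba, haN, hl, hbl, rfl⟩
  · rintro ⟨hb, hba, haN, hl, hbl, rfl⟩
    refine ⟨⟨⟨hba, fun x hx => (hbl x hx).trans hba⟩, hb.trans_le hba, hbl, hb, hl⟩,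
      ⟨haN, hba.trans haN, fun x hx => ((hbl x hx).trans hba).trans haN⟩, rfl⟩

/-- Since `[]` is the only partition with parts `≤ 0`, `b = 0` stands for the one-part
partition `[a]`. -/
def pairCons (a b : ℕ) (l : List ℕ) : List ℕ := if b = 0 then [a] else a :: b :: l

lemma mem_pairCons_self (a b : ℕ) (l : List ℕ) : a ∈ pairCons a b l := by
  unfold pairCons
  split_ifs <;> simp

lemma pairCons_tail_headD (a b : ℕ) (l : List ℕ) : (pairCons a b l).tail.headD 0 = b := by
  unfold pairCons
  split_ifs with h <;> simp [h]

lemma pairCons_injOn (a b m : ℕ) : Set.InjOn (pairCons a b) (partitionsOsum b m) := by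
  intro l hl l' hl' h
  rcases eq_or_ne b 0 with rfl | hb
  · rw [(mem_partitionsOsum_zero.1 hl).1, (mem_partitionsOsum_zero.1 hl').1]
  · simpa [pairCons, hb] using h

lemma gammaSum_pairCons {a b m : ℕ} {l : List ℕ} (hba : b ≤ a) (hl : l ∈ partitionsOsum b m) :
    gammaSum (pairCons a b l) = a - b + gammaSum l := by
  rcases eq_or_ne b 0 with rfl | hb
  · obtain ⟨rfl, -⟩ := mem_partitionsOsum_zero.1 hl
    simp [pairCons, gammaSum]
  · rw [pairCons, if_neg hb, gammaSum_cons_cons hba (Esum_le_Osum hl.1.1)]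

lemma partitionsOsum_succ_of_lt {N n : ℕ} (h : n < N + 1) :
    partitionsOsum (N + 1) n = partitionsOsum N n := by
  refine Set.Subset.antisymm (fun l hl => ⟨hl.1, fun x hx => ?_, hl.2.2⟩)
    (partitionsOsum_mono N.le_succ)
  have := hl.2.2 ▸ le_Osum_of_mem hl.1.1 hx
  omega

lemma partitionsOsum_succ_add (N m : ℕ) :
    partitionsOsum (N + 1) (N + 1 + m) = partitionsOsum N (N + 1 + m) ∪
      ⋃ b ∈ (range (N + 2) : Set ℕ), pairCons (N + 1) b '' partitionsOsum b m := by
  ext l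
  simp only [Set.mem_union, Set.mem_iUnion, Set.mem_image, coe_range, Set.mem_Iio, exists_prop]
  constructor
  · intro hl
    by_cases hN : ∀ x ∈ l, x ≤ N
    · exact Or.inl ⟨hl.1, hN, hl.2.2⟩
    right
    simp only [not_forall, not_le] at hN
    obtain ⟨x, hx, hNx⟩ := hN
    obtain _ | ⟨a, t⟩ := l
    · simp at hx
    obtain rfl : a = N + 1 := by
      have hxa : x ≤ a := by
        rcases List.mem_cons.1 hx with rfl | hx
        exacts [le_rfl, (List.pairwise_cons.1 hl.1.1).1 x hx]
      have := hl.2.1 a (by simp)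
      omega
    obtain _ | ⟨b, r⟩ := t
    · have hm : m = 0 := by simpa using hl.2.2
      exact ⟨0, by omega, [], mem_partitionsOsum_zero.2 ⟨rfl, hm⟩, rfl⟩
    · obtain ⟨hb, hba, -, hr⟩ := cons_cons_mem_partitionsOsum.1 hl
      exact ⟨b, by omega, r, hr, by simp [pairCons, hb.ne']⟩
  · rintro (hl | ⟨b, hb, l, hl, rfl⟩)
    · exact partitionsOsum_mono N.le_succ hl
    rcases eq_or_ne b 0 with rfl | hb0
    · obtain ⟨rfl, rfl⟩ := mem_partitionsOsum_zero.1 hl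
      rw [pairCons, if_pos rfl]
      exact ⟨⟨by simp, by simp⟩, by simp, by simp⟩
    · rw [pairCons, if_neg hb0]
      exact cons_cons_mem_partitionsOsum.2 ⟨Nat.pos_of_ne_zero hb0, by omega, le_rfl, hl⟩

noncomputable def oddAltGF (N : ℕ) : PowerSeries ℤ[X] :=
  PowerSeries.mk fun n => ∑ᶠ l ∈ partitionsOsum N n, X ^ gammaSum l

lemma oddAltGF_zero : oddAltGF 0 = 1 := by
  ext1 n
  simp only [oddAltGF, PowerSeries.coeff_mk, PowerSeries.coeff_one]
  split_ifs with hn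
  · subst hn
    have : partitionsOsum 0 0 = {[]} := Set.ext fun l => by simp [mem_partitionsOsum_zero]
    simp [this, gammaSum]
  · have : partitionsOsum 0 n = ∅ :=
      Set.eq_empty_of_forall_notMem fun l hl => hn (mem_partitionsOsum_zero.1 hl).2
    rw [this, finsum_mem_empty]

lemma finsum_mem_image_pairCons {N b : ℕ} (hb : b ≤ N) (m : ℕ) :
    ∑ᶠ l ∈ pairCons N b '' partitionsOsum b m, (X : ℤ[X]) ^ gammaSum l =
      X ^ (N - b) * ∑ᶠ l ∈ partitionsOsum b m, X ^ gammaSum l := by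
  rw [finsum_mem_image (pairCons_injOn N b m), mul_finsum_mem]
  exact finsum_mem_congr rfl fun l hl => by rw [gammaSum_pairCons hb hl, pow_add]

lemma coeff_oddAltGF_succ_add (N m : ℕ) :
    PowerSeries.coeff (N + 1 + m) (oddAltGF (N + 1)) = PowerSeries.coeff (N + 1 + m) (oddAltGF N) +
      ∑ b ∈ range (N + 2), X ^ (N + 1 - b) * PowerSeries.coeff m (oddAltGF b) := by
  have hdisj : Disjoint (partitionsOsum N (N + 1 + m))
      (⋃ b ∈ (range (N + 2) : Set ℕ), pairCons (N + 1) b '' partitionsOsum b m) := by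
    simp only [Set.disjoint_left, Set.mem_iUnion, Set.mem_image, not_exists, not_and]
    rintro _ hl b - l - rfl
    exact absurd (hl.2.1 _ (mem_pairCons_self _ _ _)) (by omega)
  have hpair : (range (N + 2) : Set ℕ).PairwiseDisjoint
      fun b => pairCons (N + 1) b '' partitionsOsum b m := by
    intro b _ b' _ hbb'
    simp only [Function.onFun, Set.disjoint_left, Set.mem_image, not_exists, not_and]
    rintro _ ⟨l, -, rfl⟩ l' - h
    exact hbb' (by rw [← pairCons_tail_headD (N + 1) b l, ← h, pairCons_tail_headD])
  simp only [oddAltGF, PowerSeries.coeff_mk]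
  rw [partitionsOsum_succ_add, finsum_mem_union hdisj (partitionsOsum_finite _ _)
    ((range (N + 2)).finite_toSet.biUnion fun b _ => (partitionsOsum_finite b m).image _),
    finsum_mem_biUnion hpair (range (N + 2)).finite_toSet
      (fun b _ => (partitionsOsum_finite b m).image _), finsum_mem_coe_finset]
  exact congrArg _ (sum_congr rfl fun b hb =>
    finsum_mem_image_pairCons (Nat.lt_succ_iff.1 (mem_range.1 hb)) m)

theorem oddAltGF_succ (N : ℕ) :
    oddAltGF (N + 1) = oddAltGF N + PowerSeries.X ^ (N + 1) *
      ∑ b ∈ range (N + 2), PowerSeries.C X ^ (N + 1 - b) * oddAltGF b := by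
  ext1 n
  rw [map_add, PowerSeries.coeff_X_pow_mul']
  split_ifs with h
  · obtain ⟨m, rfl⟩ := Nat.exists_eq_add_of_le h
    rw [Nat.add_sub_cancel_left, coeff_oddAltGF_succ_add, map_sum]
    exact congrArg _ (sum_congr rfl fun b _ => by rw [← map_pow, PowerSeries.coeff_C_mul])
  · simp only [oddAltGF, PowerSeries.coeff_mk, partitionsOsum_succ_of_lt (not_le.1 h), add_zero]

section QBinomial

variable {A : Type*} [CommRing A]

noncomputable def qPochhammer (x : A) (n : ℕ) : A := ∏ i ∈ range n, (1 - x ^ (i + 1))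

@[simp] lemma qPochhammer_zero (x : A) : qPochhammer x 0 = 1 := prod_range_zero _

lemma qPochhammer_succ (x : A) (n : ℕ) :
    qPochhammer x (n + 1) = qPochhammer x n * (1 - x ^ (n + 1)) :=
  prod_range_succ _ _

lemma qPochhammer_X_ne_zero {R : Type*} [CommRing R] [IsDomain R] (n : ℕ) :
    qPochhammer (X : R[X]) n ≠ 0 :=
  prod_ne_zero_iff.2 fun i _ => by
    rw [← neg_sub, neg_ne_zero, ← C_1]
    exact X_pow_sub_C_ne_zero i.succ_pos 1

@[simp] lemma qbinom_zero_right (n : ℕ) : qbinom n 0 = 1 := by cases n <;> rfl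

lemma qbinom_succ_succ (n k : ℕ) :
    qbinom (n + 1) (k + 1) = qbinom n k + X ^ (k + 1) * qbinom n (k + 1) :=
  rfl

lemma qbinom_eq_zero_of_lt : ∀ {n k : ℕ}, n < k → qbinom n k = 0
  | 0, _ + 1, _ => rfl
  | n + 1, k + 1, h => by
    rw [qbinom_succ_succ, qbinom_eq_zero_of_lt (by omega : n < k),
      qbinom_eq_zero_of_lt (by omega : n < k + 1), mul_zero, add_zero]

@[simp] lemma qbinom_self : ∀ n : ℕ, qbinom n n = 1
  | 0 => rfl
  | n + 1 => by
    rw [qbinom_succ_succ, qbinom_self n, qbinom_eq_zero_of_lt n.lt_succ_self, mul_zero, add_zero]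

theorem qPochhammer_mul_qPochhammer_mul_qbinom :
    ∀ k m : ℕ,
      qPochhammer X k * qPochhammer X m * qbinom (k + m) k = qPochhammer (X : ℤ[X]) (k + m)
  | 0, m => by simp
  | k + 1, 0 => by simp
  | k + 1, m + 1 => by
    have h₁ : qPochhammer X k * qPochhammer X (m + 1) * qbinom (k + m + 1) k =
        qPochhammer X (k + m + 1) := qPochhammer_mul_qPochhammer_mul_qbinom k (m + 1)
    have h₂ := qPochhammer_mul_qPochhammer_mul_qbinom (k + 1) m
    rw [Nat.add_right_comm, qPochhammer_succ X k] at h₂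
    rw [qPochhammer_succ X m] at h₁
    rw [show k + 1 + (m + 1) = k + m + 1 + 1 by ring, qbinom_succ_succ, qPochhammer_succ X k,
      qPochhammer_succ X m, qPochhammer_succ X (k + m + 1)]
    linear_combination (1 - X ^ (k + 1)) * h₁ + X ^ (k + 1) * (1 - X ^ (m + 1)) * h₂

theorem one_sub_X_pow_mul_qbinom_succ_succ (n k : ℕ) :
    (1 - X ^ (k + 1)) * qbinom (n + 1) (k + 1) = (1 - X ^ (n + 1)) * qbinom n k := by
  rcases lt_or_ge n k with hnk | hkn
  · rw [qbinom_eq_zero_of_lt hnk, qbinom_eq_zero_of_lt (by omega), mul_zero, mul_zero]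
  obtain ⟨m, rfl⟩ := Nat.exists_eq_add_of_le hkn
  refine mul_left_cancel₀ (mul_ne_zero (qPochhammer_X_ne_zero k) (qPochhammer_X_ne_zero m)) ?_
  have h₁ := qPochhammer_mul_qPochhammer_mul_qbinom (k + 1) m
  have h₂ := qPochhammer_mul_qPochhammer_mul_qbinom k m
  rw [Nat.add_right_comm, qPochhammer_succ X k, qPochhammer_succ X (k + m)] at h₁
  linear_combination h₁ - (1 - X ^ (k + m + 1)) * h₂

theorem qbinom_add_two_succ (n k : ℕ) :
    qbinom (n + 2) (k + 1) =
      qbinom (n + 1) (k + 1) + qbinom (n + 1) k - (1 - X ^ (n + 1)) * qbinom n k := by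
  linear_combination qbinom_succ_succ (n + 1) k - one_sub_X_pow_mul_qbinom_succ_succ n k

variable [Algebra ℤ A]

noncomputable def rogersSzego (x t : A) (n : ℕ) : A :=
  ∑ k ∈ range (n + 1), t ^ k * aeval x (qbinom n k)

@[simp] lemma rogersSzego_zero (x t : A) : rogersSzego x t 0 = 1 := by simp [rogersSzego]

lemma rogersSzego_one (x t : A) : rogersSzego x t 1 = 1 + t := by
  simp [rogersSzego, sum_range_succ]

lemma rogersSzego_eq_sum_range_succ (x t : A) (n : ℕ) :
    rogersSzego x t n = ∑ k ∈ range (n + 2), t ^ k * aeval x (qbinom n k) := by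
  rw [sum_range_succ, qbinom_eq_zero_of_lt (by omega), map_zero, mul_zero, add_zero, rogersSzego]

theorem rogersSzego_add_two (x t : A) (n : ℕ) :
    rogersSzego x t (n + 2) =
      (1 + t) * rogersSzego x t (n + 1) - t * (1 - x ^ (n + 1)) * rogersSzego x t n := by
  have h₂ : rogersSzego x t (n + 2) = 1 + ∑ k ∈ range (n + 2),
      (t ^ (k + 1) * aeval x (qbinom (n + 1) (k + 1)) + t * (t ^ k * aeval x (qbinom (n + 1) k))
        - t * (1 - x ^ (n + 1)) * (t ^ k * aeval x (qbinom n k))) := by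
    rw [rogersSzego, sum_range_succ']
    simp only [qbinom_add_two_succ, map_add, map_sub, map_mul, map_pow, aeval_X, map_one]
    simp only [qbinom_zero_right, map_one, pow_zero, mul_one]
    rw [add_comm]
    congr 1
    refine sum_congr rfl fun k _ => by ring
  have h₁ : rogersSzego x t (n + 1) =
      1 + ∑ k ∈ range (n + 2), t ^ (k + 1) * aeval x (qbinom (n + 1) (k + 1)) := by
    rw [rogersSzego_eq_sum_range_succ, sum_range_succ']
    simp [add_comm]
  rw [h₂, sum_sub_distrib, sum_add_distrib, ← mul_sum, ← mul_sum, ← rogersSzego_eq_sum_range_succ]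
  have h₃ : ∑ k ∈ range (n + 2), t ^ k * aeval x (qbinom (n + 1) k) = rogersSzego x t (n + 1) :=
    rfl
  linear_combination -h₁ + t * h₃

end QBinomial

theorem one_sub_X_mul_oddAltGF_one :
    (1 - PowerSeries.X) * oddAltGF 1 = 1 + PowerSeries.X * PowerSeries.C X := by
  have h := oddAltGF_succ 0
  simp only [sum_range_succ, sum_range_zero, oddAltGF_zero] at h
  linear_combination h

theorem one_sub_X_pow_mul_oddAltGF_add_two (N : ℕ) :
    (1 - PowerSeries.X ^ (N + 2)) * oddAltGF (N + 2) =
      (1 + PowerSeries.X * PowerSeries.C X) * oddAltGF (N + 1) -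
        PowerSeries.X * PowerSeries.C X * oddAltGF N := by
  have h₁ : oddAltGF (N + 2) = oddAltGF (N + 1) + PowerSeries.X ^ (N + 2) *
      ∑ b ∈ range (N + 3), PowerSeries.C X ^ (N + 2 - b) * oddAltGF b := oddAltGF_succ (N + 1)
  have hsplit : ∑ b ∈ range (N + 3), PowerSeries.C X ^ (N + 2 - b) * oddAltGF b =
      PowerSeries.C X * ∑ b ∈ range (N + 2), PowerSeries.C X ^ (N + 1 - b) * oddAltGF b +
        oddAltGF (N + 2) := by
    rw [sum_range_succ, Nat.sub_self, pow_zero, one_mul, mul_sum]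
    refine congrArg (· + _) (sum_congr rfl fun b hb => ?_)
    rw [show N + 2 - b = N + 1 - b + 1 by have := mem_range.1 hb; omega, pow_succ', mul_assoc]
  rw [hsplit] at h₁
  linear_combination h₁ - PowerSeries.X * PowerSeries.C X * oddAltGF_succ N

theorem qPochhammer_mul_oddAltGF (N : ℕ) :
    qPochhammer PowerSeries.X N * oddAltGF N =
      rogersSzego PowerSeries.X (PowerSeries.X * PowerSeries.C X) N := by
  induction N using Nat.twoStepInduction with
  | zero => simp [oddAltGF_zero]
  | one => simp [qPochhammer, rogersSzego_one, one_sub_X_mul_oddAltGF_one]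
  | more n ih₀ ih₁ =>
    rw [rogersSzego_add_two, ← ih₀, ← ih₁, qPochhammer_succ _ (n + 1), qPochhammer_succ _ n]
    linear_combination qPochhammer PowerSeries.X n * (1 - PowerSeries.X ^ (n + 1)) *
      one_sub_X_pow_mul_oddAltGF_add_two n

/-- In `ℤ[z]⟦q⟧` (with `q = PowerSeries.X` and `z = Polynomial.X` in the coefficients):
`(q;q)_N ∑_{π ∈ P_{≤N}} q^{O(π)} z^{γ(π)} = ∑_{k=0}^{N} q^k z^k [N choose k]_q`,
where the series on the left is defined coefficientwise. -/
theorem partitions_odd_alternating_gf (N : ℕ) :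
    (∏ i ∈ Finset.range N, (1 - (PowerSeries.X : PowerSeries (Polynomial ℤ)) ^ (i + 1)))
      * PowerSeries.mk (fun n =>
          ∑ᶠ l ∈ {l : List ℕ | IsPartition l ∧ (∀ x ∈ l, x ≤ N) ∧ Osum l = n},
            (Polynomial.X : Polynomial ℤ) ^ gammaSum l)
    = ∑ k ∈ Finset.range (N + 1),
        PowerSeries.X ^ k * (PowerSeries.C (Polynomial.X : Polynomial ℤ)) ^ k
          * Polynomial.aeval (PowerSeries.X : PowerSeries (Polynomial ℤ)) (qbinom N k) := by
  show qPochhammer PowerSeries.X N * oddAltGF N = _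
  rw [qPochhammer_mul_oddAltGF, rogersSzego]
  simp only [mul_pow]
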